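/- With the vectors r⁰, r¹³, r¹⁸ defined from the appendix S-matrix of V_{L₂}^{S₄}, one has (1/32)·Σ_{s=0}^{27} r¹⁸(s)·r¹⁸(s)·r¹³(s) / r⁰(s) = 0. (This is the Verlinde-formula computation of the fusion coefficient N_{18,18}^{13} = 0, i.e. the fusion product M¹⁸ ⊠ M¹⁸ does not contain M¹³, part of the Part-A computation in Theorem 7.3.) -/
import Mathlib


noncomputable section

/-- `W_j = (4/3)(e^{jπi/9} + e^{−jπi/9})`. -/
def Wj (j : ℕ) : ℂ :=
  (4 / 3) * (Complex.exp ((j : ℂ) * Real.pi * Complex.I / 9) +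
    Complex.exp (-((j : ℂ) * Real.pi * Complex.I / 9)))

/-- `T_j = e^{jπi/8} + e^{−jπi/8}`. -/
def Tj (j : ℕ) : ℂ :=
  Complex.exp ((j : ℂ) * Real.pi * Complex.I / 8) +
    Complex.exp (-((j : ℂ) * Real.pi * Complex.I / 8))

/-- `P_j = e^{jπi/16} + e^{−jπi/16}`. -/
def Pj (j : ℕ) : ℂ :=
  Complex.exp ((j : ℂ) * Real.pi * Complex.I / 16) +
    Complex.exp (-((j : ℂ) * Real.pi * Complex.I / 16))

/-- `√32` times the row of the S-matrix of `V_{L₂}^{S₄}` indexed by `M⁰ = V_{L₂}^{S₄}`. -/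
def r0 : Fin 28 → ℂ :=
  ![1/6, 1/6, 1/3, 1/2, 1/2, 1/3, 1/3, 2/3, 1, 1, 1, 1,
    4/3, 4/3, 4/3, 4/3, 4/3, 4/3, 1, 1, 1, 1, 1, 1, 1, 1, 2, 2]

/-- `√32` times the row of the S-matrix of `V_{L₂}^{S₄}` indexed by `M⁸`. -/
def r8 : Fin 28 → ℂ :=
  ![1, 1, 2, -1, -1, 0, 0, 0,
    (Real.sqrt 2 : ℂ), (Real.sqrt 2 : ℂ), -(Real.sqrt 2 : ℂ), -(Real.sqrt 2 : ℂ),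
    0, 0, 0, 0, 0, 0, Tj 1, Tj 3, Tj 5, Tj 7, Tj 7, Tj 5, Tj 3, Tj 1, 0, 0]

/-- `√32` times the row of the S-matrix of `V_{L₂}^{S₄}` indexed by `M¹²`. -/
def r12 : Fin 28 → ℂ :=
  ![4/3, 4/3, -4/3, 0, 0, 4/3, 4/3, -4/3, 0, 0, 0, 0,
    Wj 1, Wj 2, Wj 4, Wj 5, Wj 7, Wj 8, 0, 0, 0, 0, 0, 0, 0, 0, 0, 0]

/-- `√32` times the row of the S-matrix of `V_{L₂}^{S₄}` indexed by `M¹³`. -/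
def r13 : Fin 28 → ℂ :=
  ![4/3, 4/3, -4/3, 0, 0, -4/3, -4/3, 4/3, 0, 0, 0, 0,
    Wj 2, Wj 4, Wj 8, Wj 8, Wj 4, Wj 2, 0, 0, 0, 0, 0, 0, 0, 0, 0, 0]

/-- `√32` times the row of the S-matrix of `V_{L₂}^{S₄}` indexed by `M¹⁸`. -/
def r18 : Fin 28 → ℂ :=
  ![1, -1, 0, 1, -1, (Real.sqrt 2 : ℂ), -(Real.sqrt 2 : ℂ), 0,
    Tj 1, Tj 7, Tj 3, Tj 5, 0, 0, 0, 0, 0, 0,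
    Pj 1, Pj 3, Pj 5, Pj 7, Pj 9, Pj 11, Pj 13, Pj 15, 0, 0]

/-- `√32` times the row of the S-matrix of `V_{L₂}^{S₄}` indexed by `M¹⁹`. -/
def r19 : Fin 28 → ℂ :=
  ![1, -1, 0, 1, -1, -(Real.sqrt 2 : ℂ), (Real.sqrt 2 : ℂ), 0,
    Tj 3, Tj 5, Tj 7, Tj 1, 0, 0, 0, 0, 0, 0,
    Pj 3, Pj 9, Pj 15, Pj 11, Pj 5, Pj 1, Pj 7, Pj 13, 0, 0]

end

/-- Verlinde-formula computation of the fusion coefficient `N_{18,18}^{13} = 0`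
for `V_{L₂}^{S₄}`: the fusion product `M¹⁸ ⊠ M¹⁸` does not contain `M¹³`
(part of Theorem 7.3). -/
theorem fusion_coefficient_18_18_13 :
    (1 / 32 : ℂ) * ∑ s : Fin 28, r18 s * r18 s * r13 s / r0 s = 0 := by
  have h2 : ((Real.sqrt 2 : ℝ) : ℂ) * ((Real.sqrt 2 : ℝ) : ℂ) = 2 := by
    rw [← Complex.ofReal_mul, Real.mul_self_sqrt (by norm_num)]
    norm_num
  simp only [Fin.sum_univ_succ, Fin.sum_univ_zero, r0, r13, r18,
    Matrix.cons_val_zero, Matrix.cons_val_one, Matrix.head_cons, Matrix.cons_val_succ]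
  rw [h2, show -((Real.sqrt 2:ℝ):ℂ) * -((Real.sqrt 2:ℝ):ℂ) = 2 from by rw [neg_mul_neg, h2]]
  norm_num
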